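/- arXiv:2307.08242 — 5 statements merged into one kernel-verified Lean document; each statement's English description precedes it below -/
import Mathlib

section
/- The causal-support condition is sound: suppose every precondition atom (t = y) of every action a_j in a sequence a₁,…,a_N is assigned a support, which is either the initial state (if s₀(t) = y) or an earlier action a_i (i < j) with effect (t, y), and in either case no action strictly between the supporter and j has an effect on t with a value different from y. Then every action's preconditions hold in the state in which it is applied, i.e., the sequence is an executable plan. -/
section StateEvolution

variable {Term Val : Type*} {eff : ℕ → Term → Option Val} {s : ℕ → Term → Val}

theorem state_eq_of_eff_eq_some
    (hupd : ∀ k t, s (k + 1) t = (eff (k + 1) t).getD (s k t))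
    {i : ℕ} {t : Term} {y : Val} (hi : 1 ≤ i) (heff : eff i t = some y) : s i t = y := by
  obtain ⟨k, rfl⟩ : ∃ k, i = k + 1 := ⟨i - 1, by omega⟩
  rw [hupd, heff, Option.getD_some]

theorem state_eq_of_forall_eff_eq
    (hupd : ∀ k t, s (k + 1) t = (eff (k + 1) t).getD (s k t))
    {m n : ℕ} {t : Term} {y : Val} (hmn : m ≤ n) (hm : s m t = y)
    (hno : ∀ i, m < i → i ≤ n → ∀ y', eff i t = some y' → y' = y) : s n t = y := by
  induction n, hmn using Nat.le_induction with
  | base => exact hm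
  | succ n hmn ih =>
    rw [hupd, ih fun i h₁ h₂ => hno i h₁ (by omega)]
    cases heff : eff (n + 1) t with
    | none => rfl
    | some y' => exact hno (n + 1) (by omega) le_rfl y' heff

end StateEvolution

/-- Soundness of causal supports: if every precondition atom `(t, y)` of every action
`a_j` has a support — either the initial state (with `s 0 t = y`) or an earlier action
`a_i`, `i < j`, with effect `(t, y)` — such that no action strictly between the supporter
and `j` assigns `t` a value different from `y`, then every action's preconditions hold in
the state where it is applied. -/
theorem stmt_8 {Term Val : Type*}
    (pre : ℕ → Term → Val → Prop) (eff : ℕ → Term → Option Val)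
    (s : ℕ → Term → Val)
    (hupd : ∀ k t, s (k + 1) t = (eff (k + 1) t).getD (s k t))
    (N : ℕ)
    (hsup : ∀ j, 1 ≤ j → j ≤ N → ∀ t y, pre j t y →
      (s 0 t = y ∧ ∀ i', 1 ≤ i' → i' < j → ∀ y', eff i' t = some y' → y' = y) ∨
      (∃ i, 1 ≤ i ∧ i < j ∧ eff i t = some y ∧
        ∀ i', i < i' → i' < j → ∀ y', eff i' t = some y' → y' = y)) :
    ∀ j, 1 ≤ j → j ≤ N → ∀ t y, pre j t y → s (j - 1) t = y := by
  intro j hj hjN t y hpre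
  rcases hsup j hj hjN t y hpre with ⟨hinit, hno⟩ | ⟨i, hi, hij, heff, hno⟩
  · exact state_eq_of_forall_eff_eq hupd (Nat.zero_le _) hinit
      fun i' h₁ h₂ => hno i' h₁ (by omega)
  · exact state_eq_of_forall_eff_eq hupd (by omega) (state_eq_of_eff_eq_some hupd hi heff)
      fun i' h₁ h₂ => hno i' h₁ (by omega)
end

section
/- Systematicity of the lifted causal encoding: for a PPI P and horizon N_π, there exists a satisfying assignment to the CSP T_{P,N_π} (consisting of slot/action variables, argument variables, input/output pins with causal-support variables satisfying the binding, persistence, initial-state and goal constraints) if and only if there exists a feasible plan for P of length N_π. -/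
/-- The state reached after executing the effects of slots `1,…,k` from `s0`,
under the frame semantics (effects overwrite, everything else persists). -/
def runPlan {Term Val : Type*} (eff : ℕ → Term → Option Val) (s0 : Term → Val) :
    ℕ → Term → Val
  | 0 => s0
  | k + 1 => fun t => (eff (k + 1) t).getD (runPlan eff s0 k t)

/-!
An atom `t = y` has a causal support among slots `1, …, k` exactly when the frame semantics gives
`t` the value `y` after slot `k`: that value is the one written by the last slot `≤ k` with an
effect on `t` (or `s0 t` if there is none), and this last writer is a support that no later slot
clobbers. Conversely any support that is not clobbered fixes the value up to slot `k`. Both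
directions follow at once by induction on `k`, according to whether slot `k + 1` writes `t`.
-/

section CausalSupport

variable {Term Val : Type*} (eff : ℕ → Term → Option Val) (s0 : Term → Val)

def NoClobber (t : Term) (y : Val) (a b : ℕ) : Prop :=
  ∀ i, a < i → i ≤ b → ∀ y', eff i t = some y' → y' = y

def CausallySupported (k : ℕ) (t : Term) (y : Val) : Prop :=
  (s0 t = y ∧ NoClobber eff t y 0 k) ∨
    ∃ i, 1 ≤ i ∧ i ≤ k ∧ eff i t = some y ∧ NoClobber eff t y i k

variable {eff s0}

lemma causallySupported_zero {t : Term} {y : Val} :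
    CausallySupported eff s0 0 t y ↔ s0 t = y := by
  refine ⟨?_, fun h => .inl ⟨h, fun i hi hi0 => by omega⟩⟩
  rintro (⟨h, -⟩ | ⟨i, hi, hi0, -⟩)
  · exact h
  · omega

lemma causallySupported_succ_of_eq_some {k : ℕ} {t : Term} {y y' : Val}
    (he : eff (k + 1) t = some y') :
    CausallySupported eff s0 (k + 1) t y ↔ y' = y := by
  constructor
  · rintro (⟨-, hc⟩ | ⟨i, -, hik, hi, hc⟩)
    · exact hc (k + 1) k.succ_pos le_rfl y' he
    · rcases hik.lt_or_eq with hik | rfl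
      · exact hc (k + 1) hik le_rfl y' he
      · exact Option.some.inj (he.symm.trans hi)
  · rintro rfl
    exact .inr ⟨k + 1, k.succ_pos, le_rfl, he, fun i hi hik => by omega⟩

lemma causallySupported_succ_of_eq_none {k : ℕ} {t : Term} {y : Val}
    (he : eff (k + 1) t = none) :
    CausallySupported eff s0 (k + 1) t y ↔ CausallySupported eff s0 k t y := by
  have writer_le {i : ℕ} (hik : i ≤ k + 1) {y' : Val} (hi : eff i t = some y') : i ≤ k := by
    rcases hik.lt_or_eq with hik | rfl
    · omega
    · simp [he] at hi
  have noClobber_iff {a : ℕ} : NoClobber eff t y a (k + 1) ↔ NoClobber eff t y a k :=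
    ⟨fun hc i ha hik => hc i ha (by omega),
      fun hc i ha hik y' hi => hc i ha (writer_le hik hi) y' hi⟩
  constructor
  · rintro (⟨h0, hc⟩ | ⟨i, hi1, hik, hi, hc⟩)
    · exact .inl ⟨h0, noClobber_iff.1 hc⟩
    · exact .inr ⟨i, hi1, writer_le hik hi, hi, noClobber_iff.1 hc⟩
  · rintro (⟨h0, hc⟩ | ⟨i, hi1, hik, hi, hc⟩)
    · exact .inl ⟨h0, noClobber_iff.2 hc⟩
    · exact .inr ⟨i, hi1, by omega, hi, noClobber_iff.2 hc⟩

theorem runPlan_eq_iff_causallySupported (k : ℕ) (t : Term) (y : Val) :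
    runPlan eff s0 k t = y ↔ CausallySupported eff s0 k t y := by
  induction k generalizing y with
  | zero => exact causallySupported_zero.symm
  | succ k ih =>
    show (eff (k + 1) t).getD (runPlan eff s0 k t) = y ↔ _
    cases he : eff (k + 1) t with
    | some y' => exact (causallySupported_succ_of_eq_some he).symm
    | none => exact (ih y).trans (causallySupported_succ_of_eq_none he).symm

end CausalSupport

/-- Systematicity of the lifted causal encoding: over a fixed set `Acts` of ground
actions (pairs of precondition and effect partial assignments), there is a solution to
the causal CSP for horizon `N` — an assignment of actions to slots `1,…,N` together with
a causal support (initial state, or an earlier slot's matching effect) for every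
precondition atom and every goal atom, with no intermediate slot assigning the supported
term a different value — if and only if there is an executable plan of length `N` from
`s0` whose final state satisfies all goal atoms. -/
theorem stmt_10 {Term Val : Type*}
    (Acts : Set ((Term → Option Val) × (Term → Option Val)))
    (s0 : Term → Val) (goal : Term → Option Val) (N : ℕ) :
    (∃ π : ℕ → (Term → Option Val) × (Term → Option Val),
      (∀ j, 1 ≤ j → j ≤ N → π j ∈ Acts) ∧
      (∀ j, 1 ≤ j → j ≤ N → ∀ t y, (π j).1 t = some y →
        (s0 t = y ∧ ∀ i', 1 ≤ i' → i' < j → ∀ y', (π i').2 t = some y' → y' = y) ∨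
        (∃ i, 1 ≤ i ∧ i < j ∧ (π i).2 t = some y ∧
          ∀ i', i < i' → i' < j → ∀ y', (π i').2 t = some y' → y' = y)) ∧
      (∀ t y, goal t = some y →
        (s0 t = y ∧ ∀ i', 1 ≤ i' → i' ≤ N → ∀ y', (π i').2 t = some y' → y' = y) ∨
        (∃ i, 1 ≤ i ∧ i ≤ N ∧ (π i).2 t = some y ∧
          ∀ i', i < i' → i' ≤ N → ∀ y', (π i').2 t = some y' → y' = y))) ↔
    (∃ π : ℕ → (Term → Option Val) × (Term → Option Val),
      (∀ j, 1 ≤ j → j ≤ N → π j ∈ Acts) ∧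
      (∀ j, 1 ≤ j → j ≤ N → ∀ t y, (π j).1 t = some y →
        runPlan (fun i => (π i).2) s0 (j - 1) t = y) ∧
      (∀ t y, goal t = some y → runPlan (fun i => (π i).2) s0 N t = y)) := by
  refine exists_congr fun π => and_congr_right fun _ => and_congr ?_ ?_
  · refine forall₂_congr fun j hj => forall₄_congr fun _ t y _ => ?_
    simp only [runPlan_eq_iff_causallySupported, CausallySupported, NoClobber,
      Nat.le_sub_one_iff_lt hj]
    rfl
  · exact forall₃_congr fun t y _ => (runPlan_eq_iff_causallySupported N t y).symm
end

section
/- If the h^m value of a formula ψ is ∞ (no finite regression sequence from ψ reaches a formula satisfied by the initial state), then ψ is unreachable: no state reachable from s₀ satisfies ψ. -/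
/-!
Regressing `ψ` backwards along a path `s₀ →* s` with `s ⊨ ψ`, one step per transition, yields a
regression sequence from `ψ` whose last formula holds at `s₀`; its length is a finite upper
bound for `h(ψ)`.
-/

/-- Regression sequences: `RegSeq Rg ψ n ψ'` means `ψ'` is obtained from `ψ` by `n`
regression steps. -/
inductive RegSeq {Φ : Type*} (Rg : Φ → Φ → Prop) : Φ → ℕ → Φ → Prop
  | refl (ψ : Φ) : RegSeq Rg ψ 0 ψ
  | step {ψ ψ' ψ'' : Φ} {n : ℕ} : Rg ψ ψ' → RegSeq Rg ψ' n ψ'' → RegSeq Rg ψ (n + 1) ψ''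

/-- The regression-based distance: the least number of regression steps leading from `ψ`
to a formula satisfied by the initial state `s0` (`⊤` if there is none). -/
noncomputable def regH {S Φ : Type*} (Rg : Φ → Φ → Prop) (sat : S → Φ → Prop)
    (s0 : S) (ψ : Φ) : ℕ∞ :=
  sInf {m : ℕ∞ | ∃ (n : ℕ) (ψ' : Φ), RegSeq Rg ψ n ψ' ∧ sat s0 ψ' ∧ m = (n : ℕ∞)}

namespace RegSeq

variable {Φ : Type*} {Rg : Φ → Φ → Prop}

theorem snoc {ψ ψ' ψ'' : Φ} {n : ℕ} (h : RegSeq Rg ψ n ψ') (h' : Rg ψ' ψ'') :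
    RegSeq Rg ψ (n + 1) ψ'' := by
  induction h with
  | refl => exact step h' (refl _)
  | step r _ ih => exact step r (ih h')

theorem regH_le {S : Type*} {sat : S → Φ → Prop} {s0 : S} {ψ ψ' : Φ} {n : ℕ}
    (h : RegSeq Rg ψ n ψ') (hsat : sat s0 ψ') : regH Rg sat s0 ψ ≤ n :=
  sInf_le ⟨n, ψ', h, hsat, rfl⟩

theorem regH_ne_top {S : Type*} {sat : S → Φ → Prop} {s0 : S} {ψ ψ' : Φ} {n : ℕ}
    (h : RegSeq Rg ψ n ψ') (hsat : sat s0 ψ') : regH Rg sat s0 ψ ≠ ⊤ :=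
  ne_top_of_le_ne_top (ENat.natCast_ne_top n) (h.regH_le hsat)

end RegSeq

theorem exists_regSeq_of_reflTransGen {S Φ : Type*} {step : S → S → Prop}
    {sat : S → Φ → Prop} {Rg : Φ → Φ → Prop}
    (hreg : ∀ s s' ψ, step s s' → sat s' ψ → ∃ ψ', Rg ψ ψ' ∧ sat s ψ')
    {s t : S} (hst : Relation.ReflTransGen step s t) {ψ : Φ} (hψ : sat t ψ) :
    ∃ n ψ', RegSeq Rg ψ n ψ' ∧ sat s ψ' := by
  induction hst using Relation.ReflTransGen.head_induction_on with
  | refl => exact ⟨0, ψ, RegSeq.refl ψ, hψ⟩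
  | head hstep _ ih =>
    obtain ⟨n, ψ', hseq, hsat⟩ := ih
    obtain ⟨ψ'', hr, hsat'⟩ := hreg _ _ ψ' hstep hsat
    exact ⟨n + 1, ψ'', hseq.snoc hr, hsat'⟩

/-- Unreachability soundness: if `regH ψ = ∞` (no finite regression sequence from `ψ`
reaches a formula satisfied by `s0`), then no state reachable from `s0` satisfies `ψ`.
The regression relation is assumed sound: for every transition `s → s'` and formula `ψ`
with `s' ⊨ ψ`, some regression `ψ'` of `ψ` satisfies `s ⊨ ψ'`. -/
theorem stmt_13 {S Φ : Type*} (step : S → S → Prop) (s0 : S)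
    (sat : S → Φ → Prop) (Rg : Φ → Φ → Prop)
    (hreg : ∀ s s' ψ, step s s' → sat s' ψ → ∃ ψ', Rg ψ ψ' ∧ sat s ψ')
    (ψ : Φ) (hinf : regH Rg sat s0 ψ = ⊤) :
    ∀ s, Relation.ReflTransGen step s0 s → ¬ sat s ψ := by
  intro s hs hsat
  obtain ⟨n, ψ', hseq, hsat0⟩ := exists_regSeq_of_reflTransGen hreg hs hsat
  exact hseq.regH_ne_top hsat0 hinf
end

section
/- Admissibility of regression-based cost: in the abstract regression setting, if a state s reachable from s₀ in k steps satisfies ψ, then h(ψ) ≤ k, where h is the regression-based distance (h(ψ)=0 if s₀ ⊨ ψ, otherwise 1 plus the minimum over one-step regressions). -/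
/-- `k`-step reachability. -/
inductive StepN {S : Type*} (step : S → S → Prop) : S → ℕ → S → Prop
  | refl (s : S) : StepN step s 0 s
  | tail {s s' s'' : S} {n : ℕ} : StepN step s n s' → step s' s'' → StepN step s (n + 1) s''

theorem regH_le_of_regSeq {S Φ : Type*} {Rg : Φ → Φ → Prop} {sat : S → Φ → Prop} {s0 : S}
    {ψ ψ' : Φ} {n : ℕ} (hseq : RegSeq Rg ψ n ψ') (hs0 : sat s0 ψ') :
    regH Rg sat s0 ψ ≤ n :=
  sInf_le ⟨n, ψ', hseq, hs0, rfl⟩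

theorem StepN.exists_regSeq {S Φ : Type*} {step : S → S → Prop} {sat : S → Φ → Prop}
    {Rg : Φ → Φ → Prop} (hreg : ∀ s s' ψ, step s s' → sat s' ψ → ∃ ψ', Rg ψ ψ' ∧ sat s ψ')
    {s s' : S} {n : ℕ} (hpath : StepN step s n s') {ψ : Φ} (hψ : sat s' ψ) :
    ∃ ψ', RegSeq Rg ψ n ψ' ∧ sat s ψ' := by
  induction hpath generalizing ψ with
  | refl => exact ⟨ψ, .refl ψ, hψ⟩
  | tail _ hlast ih =>
    obtain ⟨ψ₁, hRg, hψ₁⟩ := hreg _ _ _ hlast hψ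
    obtain ⟨ψ₂, hseq, hψ₂⟩ := ih hψ₁
    exact ⟨ψ₂, .step hRg hseq, hψ₂⟩

/-- Admissibility: if a state `s` reachable from `s0` in `k` steps satisfies `ψ`, then
the regression-based distance of `ψ` is at most `k`. -/
theorem stmt_14 {S Φ : Type*} (step : S → S → Prop) (s0 : S)
    (sat : S → Φ → Prop) (Rg : Φ → Φ → Prop)
    (hreg : ∀ s s' ψ, step s s' → sat s' ψ → ∃ ψ', Rg ψ ψ' ∧ sat s ψ')
    (s : S) (k : ℕ) (hk : StepN step s0 k s) (ψ : Φ) (hs : sat s ψ) :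
    regH Rg sat s0 ψ ≤ (k : ℕ∞) := by
  obtain ⟨ψ', hseq, hs0⟩ := hk.exists_regSeq hreg hs
  exact regH_le_of_regSeq hseq hs0
end

section
/- In a plan encoded with totally ordered slots, if input pin in_{jk} is supported by output pin out_{il} with slot index i < j, and the persistence constraints hold for all intermediate slots, then the value of the supported term in every state s_m with i ≤ m < j equals the value y set by out_{il}; in particular the precondition atom encoded by in_{jk} holds at state s_{j−1}. -/
/-- Soundness of a causal support in the totally-ordered-slot encoding: if input pin
`in_{jk}` (term `tm`, value `y`, required at state `s (j-1)`) is supported by output pin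
`out_{il}` of an earlier slot `i < j` (slot `0` standing for the initial state), and the
persistence constraints hold for all intermediate slots (no slot `j'` with `i < j' < j`
assigns `tm` a different value), then `s m tm = y` for every `i ≤ m < j`; in particular
the precondition atom encoded by `in_{jk}` holds at state `s (j-1)`.
States evolve by the frame semantics `s (k+1) t = (eff (k+1) t).getD (s k t)`. -/
theorem stmt_16 {Term Val : Type*} (s : ℕ → Term → Val) (eff : ℕ → Term → Option Val)
    (hupd : ∀ k t, s (k + 1) t = (eff (k + 1) t).getD (s k t))
    (i j : ℕ) (hij : i < j) (tm : Term) (y : Val)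
    (hsup : (i = 0 ∧ s 0 tm = y) ∨ (1 ≤ i ∧ eff i tm = some y))
    (hpers : ∀ j', i < j' → j' < j → ∀ y', eff j' tm = some y' → y' = y) :
    (∀ m, i ≤ m → m < j → s m tm = y) ∧ s (j - 1) tm = y := by
  have hbase : s i tm = y := by
    rcases hsup with ⟨h0, hs⟩ | ⟨h1, he⟩
    · simpa [h0] using hs
    · obtain ⟨i', rfl⟩ : ∃ i', i = i' + 1 := ⟨i - 1, (Nat.succ_pred_eq_of_pos h1).symm⟩
      rw [hupd, he]; rfl
  have hall : ∀ m, i ≤ m → m < j → s m tm = y := by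
    intro m him hmj
    induction m with
    | zero => simpa [Nat.le_zero.mp him] using hbase
    | succ n ih =>
      rcases Nat.lt_or_ge i (n + 1) with h | h
      · have hn : s n tm = y := ih (Nat.lt_succ_iff.mp h) (Nat.lt_of_succ_lt hmj)
        rw [hupd]
        cases he : eff (n + 1) tm with
        | none => simpa [he] using hn
        | some y' => simpa [he] using hpers (n + 1) h hmj y' he
      · have : i = n + 1 := le_antisymm him h
        simpa [this] using hbase
  exact ⟨hall, hall (j - 1) (Nat.le_sub_one_of_lt hij) (Nat.sub_lt (Nat.pos_of_ne_zero (by omega)) one_pos)⟩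
end
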